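/- arXiv:2403.10093 — 3 statements merged into one kernel-verified Lean document; each statement's English description precedes it below -/
import Mathlib

section
/- Let X ⊆ U, x₀ ∈ X, F : U → ℝᵖ with F(x) ∈ ℝᵖ₊₊ for all x ∈ X, f : U → ℝᵖ, and set s := f(x₀)/F(x₀) (componentwise). Then x₀ is a Pareto efficient point of x ↦ f(x)/F(x) over X if and only if x₀ is a Pareto efficient point of x ↦ f(x) − s * F(x) over X, where * denotes componentwise product and f(x)/F(x) is the componentwise quotient. -/
/-! Pareto efficiency of `φ` at `x₀` depends only on the signs of the differences
`φ x i - φ x₀ i`. With `s = f x₀ / F x₀`, the second objective has differences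
`F x i * (f x i / F x i - s)`, positive multiples of those of the first. -/

/-- x₀ is a Pareto efficient point of φ over X: there is no x ∈ X with
φ(x) ≤ φ(x₀) componentwise and φ(x) ≠ φ(x₀). -/
def ParetoEff {Z : Type*} {p : ℕ} (X : Set Z) (φ : Z → (Fin p → ℝ)) (x₀ : Z) : Prop :=
  ¬ ∃ x ∈ X, (∀ i, φ x i ≤ φ x₀ i) ∧ φ x ≠ φ x₀

theorem paretoEff_iff_of_sub_eq_mul_sub {Z : Type*} {p : ℕ} {X : Set Z} {x₀ : Z}
    {φ ψ : Z → (Fin p → ℝ)} (c : Z → (Fin p → ℝ)) (hc : ∀ x ∈ X, ∀ i, 0 < c x i)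
    (h : ∀ x ∈ X, ∀ i, ψ x i - ψ x₀ i = c x i * (φ x i - φ x₀ i)) :
    ParetoEff X φ x₀ ↔ ParetoEff X ψ x₀ := by
  have hle : ∀ x ∈ X, ∀ i, φ x i ≤ φ x₀ i ↔ ψ x i ≤ ψ x₀ i := fun x hx i => by
    rw [← sub_nonpos (a := ψ x i), h x hx i, ← sub_nonpos (a := φ x i)]
    simpa using (mul_le_mul_iff_right₀ (b := φ x i - φ x₀ i) (c := 0) (hc x hx i)).symm
  have heq : ∀ x ∈ X, φ x = φ x₀ ↔ ψ x = ψ x₀ := fun x hx => by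
    simp only [funext_iff, ← sub_eq_zero (a := ψ x _), h x hx, mul_eq_zero,
      (hc x hx _).ne', false_or, sub_eq_zero]
  exact not_congr <| exists_congr fun x => and_congr_right fun hx =>
    and_congr (forall_congr' (hle x hx)) (not_congr (heq x hx))

theorem stmt8_general {Z : Type*} {p : ℕ}
    (U X : Set Z) (hXU : X ⊆ U) (x₀ : Z) (hx₀ : x₀ ∈ X)
    (f F : Z → (Fin p → ℝ)) (hF : ∀ x ∈ U, ∀ i, 0 < F x i) :
    ParetoEff X (fun x i => f x i / F x i) x₀ ↔
      ParetoEff X (fun x i => f x i - (f x₀ i / F x₀ i) * F x i) x₀ := by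
  refine paretoEff_iff_of_sub_eq_mul_sub F (fun x hx => hF x (hXU hx)) fun x hx i => ?_
  have hFx := (hF x (hXU hx) i).ne'
  have hFx₀ := (hF x₀ (hXU hx₀) i).ne'
  field_simp
  ring

theorem stmt8 {Z : Type*} [NormedAddCommGroup Z] [NormedSpace ℝ Z] {p : ℕ}
    (U X : Set Z) (hXU : X ⊆ U) (x₀ : Z) (hx₀ : x₀ ∈ X)
    (f F : Z → (Fin p → ℝ)) (hF : ∀ x ∈ U, ∀ i, 0 < F x i) :
    ParetoEff X (fun x i => f x i / F x i) x₀ ↔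
      ParetoEff X (fun x i => f x i - (f x₀ i / F x₀ i) * F x i) x₀ :=
  stmt8_general U X hXU x₀ hx₀ f F hF
end

section
/- Let X ⊆ U, x₀ ∈ X, F : U → ℝᵖ with F(x) ∈ ℝᵖ₊₊ for all x ∈ X, f : U → ℝᵖ, and s := f(x₀)/F(x₀). Then x₀ is a weak Pareto efficient point of x ↦ f(x)/F(x) over X if and only if it is a weak Pareto efficient point of x ↦ f(x) − s * F(x) over X. -/
open Filter Topology

/-- x₀ is a weak Pareto efficient point of φ over X: there is no x ∈ X with
φ(x) < φ(x₀) in every component. -/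
def WeakParetoEff {Z : Type*} {p : ℕ} (X : Set Z) (φ : Z → (Fin p → ℝ)) (x₀ : Z) : Prop :=
  ¬ ∃ x ∈ X, ∀ i, φ x i < φ x₀ i

theorem WeakParetoEff.congr_lt {Z : Type*} {p : ℕ} {X : Set Z} {φ ψ : Z → (Fin p → ℝ)} {x₀ : Z}
    (h : ∀ x ∈ X, ∀ i, φ x i < φ x₀ i ↔ ψ x i < ψ x₀ i) :
    WeakParetoEff X φ x₀ ↔ WeakParetoEff X ψ x₀ :=
  not_congr <| exists_congr fun x => and_congr_right fun hx => forall_congr' (h x hx)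

theorem div_lt_div_iff_sub_div_mul_lt_sub {K : Type*} [Field K] [LinearOrder K]
    [IsStrictOrderedRing K] {a b a₀ b₀ : K} (hb : 0 < b) (hb₀ : b₀ ≠ 0) :
    a / b < a₀ / b₀ ↔ a - a₀ / b₀ * b < a₀ - a₀ / b₀ * b₀ := by
  rw [div_mul_cancel₀ a₀ hb₀, sub_self, sub_neg, div_lt_iff₀ hb]

theorem stmt9_general {Z : Type*} {p : ℕ}
    (U X : Set Z) (hXU : X ⊆ U) (x₀ : Z) (hx₀ : x₀ ∈ X)
    (f F : Z → (Fin p → ℝ)) (hF : ∀ x ∈ U, ∀ i, 0 < F x i) :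
    WeakParetoEff X (fun x i => f x i / F x i) x₀ ↔
      WeakParetoEff X (fun x i => f x i - (f x₀ i / F x₀ i) * F x i) x₀ :=
  WeakParetoEff.congr_lt fun x hx i =>
    div_lt_div_iff_sub_div_mul_lt_sub (hF x (hXU hx) i) (hF x₀ (hXU hx₀) i).ne'

theorem stmt9 {Z : Type*} [NormedAddCommGroup Z] [NormedSpace ℝ Z] {p : ℕ}
    (U X : Set Z) (hXU : X ⊆ U) (x₀ : Z) (hx₀ : x₀ ∈ X)
    (f F : Z → (Fin p → ℝ)) (hF : ∀ x ∈ U, ∀ i, 0 < F x i) :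
    WeakParetoEff X (fun x i => f x i / F x i) x₀ ↔
      WeakParetoEff X (fun x i => f x i - (f x₀ i / F x₀ i) * F x i) x₀ :=
  stmt9_general U X hXU x₀ hx₀ f F hF
end

section
/- Let X ⊆ Z and x₀ ∈ X. The projective second-order tangent cone in direction v = 0 satisfies T̃²(X, x₀, 0) = T(X, x₀) × ℝ₊, where T(X, x₀) is the contingent cone of X at x₀. -/
open Filter Topology

/-- The contingent (Bouligand tangent) cone of X at x₀. -/
def contingentCone {Z : Type*} [NormedAddCommGroup Z] [NormedSpace ℝ Z]
    (X : Set Z) (x₀ : Z) : Set Z :=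
  {d | ∃ t : ℕ → ℝ, ∃ dk : ℕ → Z, (∀ k, 0 < t k) ∧ Tendsto t atTop (𝓝 0) ∧
    Tendsto dk atTop (𝓝 d) ∧ ∀ k, x₀ + t k • dk k ∈ X}

/-- The projective second-order tangent cone of X at x₀ in the direction v. -/
def projTangent2 {Z : Type*} [NormedAddCommGroup Z] [NormedSpace ℝ Z]
    (X : Set Z) (x₀ v : Z) : Set (Z × ℝ) :=
  {p | 0 ≤ p.2 ∧ ∃ t r : ℕ → ℝ, ∃ w : ℕ → Z,
    (∀ k, 0 < t k) ∧ Tendsto t atTop (𝓝 0) ∧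
    Tendsto r atTop (𝓝 p.2) ∧ Tendsto w atTop (𝓝 p.1) ∧
    (∀ k, 0 < t k / r k) ∧ Tendsto (fun k => t k / r k) atTop (𝓝 0) ∧
    ∀ k, x₀ + t k • v + ((t k) ^ 2 / 2) • w k ∈ X}

theorem stmt12 {Z : Type*} [NormedAddCommGroup Z] [NormedSpace ℝ Z]
    (X : Set Z) (x₀ : Z) (hx₀ : x₀ ∈ X) :
    projTangent2 X x₀ 0 = (contingentCone X x₀) ×ˢ (Set.Ici (0:ℝ)) := by
  ext ⟨d, ρ⟩
  constructor
  · rintro ⟨hρ, t, r, w, htpos, ht0, hr, hw, hdivpos, hdiv0, hmem⟩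
    refine ⟨⟨fun k => t k ^ 2 / 2, w, fun k => by have := htpos k; positivity, ?_, hw, ?_⟩, hρ⟩
    · have : Tendsto (fun k => t k ^ 2 / 2) atTop (𝓝 ((0:ℝ) ^ 2 / 2)) :=
        (ht0.pow 2).div_const 2
      simpa using this
    · intro k
      have := hmem k
      simpa using this
  · rintro ⟨⟨s, dk, hspos, hs0, hdk, hmem⟩, hρ⟩
    simp only [Set.mem_Ici] at hρ
    refine ⟨hρ, fun k => Real.sqrt (2 * s k), fun k => ρ + Real.sqrt (Real.sqrt (2 * s k)),
      dk, fun k => Real.sqrt_pos.mpr (by have := hspos k; linarith), ?_, ?_, hdk, ?_, ?_, ?_⟩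
    · have : Tendsto (fun k => Real.sqrt (2 * s k)) atTop (𝓝 (Real.sqrt (2 * 0))) :=
        (Real.continuous_sqrt.tendsto _).comp (hs0.const_mul 2)
      simpa using this
    · have h1 : Tendsto (fun k => Real.sqrt (2 * s k)) atTop (𝓝 0) := by
        have : Tendsto (fun k => Real.sqrt (2 * s k)) atTop (𝓝 (Real.sqrt (2 * 0))) :=
          (Real.continuous_sqrt.tendsto _).comp (hs0.const_mul 2)
        simpa using this
      have h2 : Tendsto (fun k => Real.sqrt (Real.sqrt (2 * s k))) atTop (𝓝 0) := by
        have : Tendsto (fun k => Real.sqrt (Real.sqrt (2 * s k))) atTop (𝓝 (Real.sqrt 0)) :=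
          (Real.continuous_sqrt.tendsto _).comp h1
        simpa using this
      simpa using tendsto_const_nhds.add h2
    · intro k
      dsimp only
      have htk : 0 < Real.sqrt (2 * s k) := Real.sqrt_pos.mpr (by have := hspos k; linarith)
      have h2 : 0 < Real.sqrt (Real.sqrt (2 * s k)) := Real.sqrt_pos.mpr htk
      exact div_pos htk (by linarith)
    · -- squeeze: 0 ≤ t/r ≤ sqrt t
      have h1 : Tendsto (fun k => Real.sqrt (2 * s k)) atTop (𝓝 0) := by
        have : Tendsto (fun k => Real.sqrt (2 * s k)) atTop (𝓝 (Real.sqrt (2 * 0))) :=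
          (Real.continuous_sqrt.tendsto _).comp (hs0.const_mul 2)
        simpa using this
      have h2 : Tendsto (fun k => Real.sqrt (Real.sqrt (2 * s k))) atTop (𝓝 0) := by
        have : Tendsto (fun k => Real.sqrt (Real.sqrt (2 * s k))) atTop (𝓝 (Real.sqrt 0)) :=
          (Real.continuous_sqrt.tendsto _).comp h1
        simpa using this
      refine tendsto_of_tendsto_of_tendsto_of_le_of_le tendsto_const_nhds h2 ?_ ?_
      · intro k
        dsimp only
        have htk : 0 < Real.sqrt (2 * s k) := Real.sqrt_pos.mpr (by have := hspos k; linarith)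
        have hst : 0 < Real.sqrt (Real.sqrt (2 * s k)) := Real.sqrt_pos.mpr htk
        exact (div_pos htk (by linarith)).le
      · intro k
        dsimp only
        set T := Real.sqrt (2 * s k) with hT
        have htk : 0 < T := Real.sqrt_pos.mpr (by have := hspos k; linarith)
        have hst : 0 < Real.sqrt T := Real.sqrt_pos.mpr htk
        rw [div_le_iff₀ (by linarith)]
        calc T = Real.sqrt T * Real.sqrt T := (Real.mul_self_sqrt htk.le).symm
          _ ≤ Real.sqrt T * (ρ + Real.sqrt T) := by nlinarith
    · intro k
      have h2s : (0:ℝ) ≤ 2 * s k := by have := hspos k; linarith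
      have heq : Real.sqrt (2 * s k) ^ 2 / 2 = s k := by
        rw [Real.sq_sqrt h2s]; ring
      rw [smul_zero, add_zero, heq]
      exact hmem k
end
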